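/- arXiv:2006.05051 — 7 statements merged into one kernel-verified Lean document; each statement's English description precedes it below -/
import Mathlib

section
/- Simulation lemma: For any Markovian policy π, any transition function p, any objective m, any true transition function p★ and true objective m★, and every state s, the difference of values equals the expected sum of Bellman errors along a trajectory of π in the true model: V_m^{π,p}(s,1) − V_{m★}^{π,p★}(s,1) = E^{π,p★}[ Σ_{h=1}^H Bell_m^{π,p}(s_h, a_h, h) | s_1 = s ]. -/
open Finset

section MDPDefs

variable {S A : Type*} [Fintype S] [Fintype A]

/-- Expected cumulative sum of a step-dependent objective `φ h s a`, defined by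
backward recursion on the number `n` of remaining steps, where `h` is the current stage. -/
noncomputable def EValAux (π : ℕ → S → PMF A) (p : S → A → PMF S)
    (φ : ℕ → S → A → ℝ) : ℕ → ℕ → S → ℝ
  | 0, _, _ => 0
  | n + 1, h, s =>
      ∑ a : A, (π h s a).toReal *
        (φ h s a + ∑ s' : S, (p s a s').toReal * EValAux π p φ n (h + 1) s')

/-- `EVal H π p φ h s = E^{π,p}[ Σ_{h'=h}^H φ(h', s_{h'}, a_{h'}) | s_h = s ]`. -/
noncomputable def EVal (H : ℕ) (π : ℕ → S → PMF A) (p : S → A → PMF S)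
    (φ : ℕ → S → A → ℝ) (h : ℕ) (s : S) : ℝ :=
  EValAux π p φ (H + 1 - h) h s

/-- Value function `V_m^{π,p}(s,h)` of the objective `m` for horizon `H`. -/
noncomputable def Vf (H : ℕ) (π : ℕ → S → PMF A) (p : S → A → PMF S)
    (m : S → A → ℝ) (h : ℕ) (s : S) : ℝ :=
  EVal H π p (fun _ s a => m s a) h s

/-- Q-function `Q_m^{π,p}(s,a,h)` of the objective `m` for horizon `H`. -/
noncomputable def Qf (H : ℕ) (π : ℕ → S → PMF A) (p : S → A → PMF S)
    (m : S → A → ℝ) (h : ℕ) (s : S) (a : A) : ℝ :=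
  m s a + ∑ s' : S, (p s a s').toReal * Vf H π p m (h + 1) s'

/-- Bellman error of the model `(p, m)` under policy `π`, with respect to the
true transition function `pstar` and true objective `mstar`. -/
noncomputable def Bell (H : ℕ) (π : ℕ → S → PMF A) (p : S → A → PMF S) (m : S → A → ℝ)
    (pstar : S → A → PMF S) (mstar : S → A → ℝ) (h : ℕ) (s : S) (a : A) : ℝ :=
  Qf H π p m h s a - (mstar s a + ∑ s' : S, (pstar s a s').toReal * Vf H π p m (h + 1) s')

end MDPDefs

private lemma simulation_aux {S A : Type*} [Fintype S] [Fintype A]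
    (H : ℕ) (π : ℕ → S → PMF A) (p pstar : S → A → PMF S)
    (m mstar : S → A → ℝ) :
    ∀ n h, h + n = H + 1 → ∀ s : S,
      EValAux π p (fun _ s a => m s a) n h s
        - EValAux π pstar (fun _ s a => mstar s a) n h s
      = EValAux π pstar (fun h s a => Bell H π p m pstar mstar h s a) n h s := by
  intro n
  induction n with
  | zero => intro h _ s; simp [EValAux]
  | succ n ih =>
    intro h hh s
    have hV : ∀ s' : S, Vf H π p m (h + 1) s'
        = EValAux π p (fun _ s a => m s a) n (h + 1) s' := by
      intro s'
      have hn : H + 1 - (h + 1) = n := by omega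
      simp [Vf, EVal, hn]
    have hIH : ∀ s' : S, EValAux π pstar
        (fun h s a => Bell H π p m pstar mstar h s a) n (h + 1) s'
        = EValAux π p (fun _ s a => m s a) n (h + 1) s'
          - EValAux π pstar (fun _ s a => mstar s a) n (h + 1) s' := by
      intro s'; rw [ih (h + 1) (by omega) s']
    simp only [EValAux]
    rw [← Finset.sum_sub_distrib]
    refine Finset.sum_congr rfl fun a _ => ?_
    rw [← mul_sub]
    congr 1
    simp only [hIH]
    simp only [Bell, Qf, hV, mul_sub, Finset.sum_sub_distrib]
    ring

/-- **Simulation lemma.** For any Markovian policy `π`, model `(p, m)`, and true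
model `(pstar, mstar)`, the difference of values at stage 1 equals the expected
sum of Bellman errors along a trajectory of `π` in the true model. -/
theorem simulation_lemma
    {S A : Type*} [Fintype S] [Fintype A] [Nonempty S] [Nonempty A]
    (H : ℕ) (π : ℕ → S → PMF A) (p pstar : S → A → PMF S)
    (m mstar : S → A → ℝ) (s : S) :
    Vf H π p m 1 s - Vf H π pstar mstar 1 s
      = EVal H π pstar (fun h s a => Bell H π p m pstar mstar h s a) 1 s := by
  have h1 : H + 1 - 1 = H := by omega
  simp only [Vf, EVal, h1]
  exact simulation_aux H π p pstar m mstar H 1 (by omega) s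
end

section
/- Valid bonus implies optimism (reward direction): Fix a Markovian policy π, a true transition function p★ and true reward r★ : S × A → [0,1], empirical estimates p̂ (a transition function) and r̂ : S × A → ℝ, and a bonus b : S × A → ℝ. Suppose that for all s ∈ S, a ∈ A, h ∈ {1,…,H}: | (r̂(s,a) − r★(s,a)) + Σ_{s'∈S} (p̂(s'|s,a) − p★(s'|s,a)) · V_{r★}^{π,p★}(s', h+1) | ≤ b(s,a). Then for all s, a, h: Q_{r̂+b}^{π,p̂}(s,a,h) ≥ Q_{r★}^{π,p★}(s,a,h); in particular V_{r̂+b}^{π,p̂}(s,1) ≥ V_{r★}^{π,p★}(s,1) for every state s. -/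
open Finset

/-- **Valid bonus implies optimism (reward direction).** If the bonus `b` is valid
for the reward objective with respect to the policy `π`, then the bonus-enhanced
model overestimates the true Q-function and value function. -/
theorem valid_bonus_implies_optimism_reward
    {S A : Type*} [Fintype S] [Fintype A] [Nonempty S] [Nonempty A]
    (H : ℕ) (π : ℕ → S → PMF A) (pstar phat : S → A → PMF S)
    (rstar rhat b : S → A → ℝ)
    (hrstar : ∀ s a, rstar s a ∈ Set.Icc (0 : ℝ) 1)
    (hvalid : ∀ s a h, 1 ≤ h → h ≤ H →
      |(rhat s a - rstar s a)
          + ∑ s' : S, ((phat s a s').toReal - (pstar s a s').toReal) *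
              Vf H π pstar rstar (h + 1) s'|
        ≤ b s a) :
    (∀ s a h, 1 ≤ h → h ≤ H →
        Qf H π phat (fun s a => rhat s a + b s a) h s a ≥ Qf H π pstar rstar h s a)
    ∧ (∀ s : S,
        Vf H π phat (fun s a => rhat s a + b s a) 1 s ≥ Vf H π pstar rstar 1 s) := by

  -- Key: the per-(s,a) inner comparison at stage h with n remaining steps after h
  have key : ∀ n h, n + h = H + 1 → 1 ≤ h → ∀ s,
      EValAux π pstar (fun _ => rstar) n h s ≤
        EValAux π phat (fun _ s a => rhat s a + b s a) n h s := by
    intro n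
    induction n with
    | zero => intro h _ _ s; simp [EValAux]
    | succ n ih =>
      intro h hn h1 s
      have hhH : h ≤ H := by omega
      have hVeq : ∀ s' : S, Vf H π pstar rstar (h + 1) s'
          = EValAux π pstar (fun _ => rstar) n (h + 1) s' := by
        intro s'
        simp [Vf, EVal, show H + 1 - (h + 1) = n from by omega]
      simp only [EValAux]
      refine Finset.sum_le_sum fun a _ => ?_
      refine mul_le_mul_of_nonneg_left ?_ ENNReal.toReal_nonneg
      have hsum : ∑ s' : S, (phat s a s').toReal * EValAux π pstar (fun _ => rstar) n (h + 1) s'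
          ≤ ∑ s' : S, (phat s a s').toReal *
              EValAux π phat (fun _ s a => rhat s a + b s a) n (h + 1) s' :=
        Finset.sum_le_sum fun s' _ => mul_le_mul_of_nonneg_left
          (ih (h + 1) (by omega) (by omega) s') ENNReal.toReal_nonneg
      have hv := hvalid s a h h1 hhH
      rw [abs_le] at hv
      have hsplit : ∑ s' : S, ((phat s a s').toReal - (pstar s a s').toReal) *
            Vf H π pstar rstar (h + 1) s'
          = (∑ s' : S, (phat s a s').toReal * EValAux π pstar (fun _ => rstar) n (h + 1) s')
            - ∑ s' : S, (pstar s a s').toReal * EValAux π pstar (fun _ => rstar) n (h + 1) s' := by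
        rw [← Finset.sum_sub_distrib]
        exact Finset.sum_congr rfl fun s' _ => by rw [hVeq s', sub_mul]
      have h1' := hv.1
      rw [hsplit] at h1'
      linarith
  have hQ : ∀ s a h, 1 ≤ h → h ≤ H →
      Qf H π phat (fun s a => rhat s a + b s a) h s a ≥ Qf H π pstar rstar h s a := by
    intro s a h h1 hH
    have hVeq : ∀ (p : S → A → PMF S) (m : S → A → ℝ) (s' : S),
        Vf H π p m (h + 1) s' = EValAux π p (fun _ => m) (H - h) (h + 1) s' := by
      intro p m s'
      simp [Vf, EVal, show H + 1 - (h + 1) = H - h from by omega]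
    have hsum : ∑ s' : S, (phat s a s').toReal * EValAux π pstar (fun _ => rstar) (H - h) (h + 1) s'
        ≤ ∑ s' : S, (phat s a s').toReal *
            EValAux π phat (fun _ s a => rhat s a + b s a) (H - h) (h + 1) s' :=
      Finset.sum_le_sum fun s' _ => mul_le_mul_of_nonneg_left
        (key (H - h) (h + 1) (by omega) (by omega) s') ENNReal.toReal_nonneg
    have hv := hvalid s a h h1 hH
    rw [abs_le] at hv
    have hsplit : ∑ s' : S, ((phat s a s').toReal - (pstar s a s').toReal) *
          Vf H π pstar rstar (h + 1) s'
        = (∑ s' : S, (phat s a s').toReal * EValAux π pstar (fun _ => rstar) (H - h) (h + 1) s')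
          - ∑ s' : S, (pstar s a s').toReal * EValAux π pstar (fun _ => rstar) (H - h) (h + 1) s' := by
      rw [← Finset.sum_sub_distrib]
      exact Finset.sum_congr rfl fun s' _ => by rw [hVeq, sub_mul]
    have h1' := hv.1
    rw [hsplit] at h1'
    simp only [Qf, ge_iff_le, hVeq]
    linarith
  refine ⟨hQ, fun s => ?_⟩
  have : Vf H π pstar rstar 1 s = EValAux π pstar (fun _ => rstar) H 1 s := by
    simp [Vf, EVal]
  simp only [Vf, EVal, ge_iff_le, Nat.add_sub_cancel]
  exact key H 1 rfl le_rfl s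
end

section
/- Valid bonus implies optimism (consumption direction): Fix a Markovian policy π, a true transition function p★ and true consumption c★ : S × A → [0,1], empirical estimates p̂ (a transition function) and ĉ : S × A → ℝ, and a bonus b : S × A → ℝ. Suppose that for all s ∈ S, a ∈ A, h ∈ {1,…,H}: | (ĉ(s,a) − c★(s,a)) + Σ_{s'∈S} (p̂(s'|s,a) − p★(s'|s,a)) · V_{c★}^{π,p★}(s', h+1) | ≤ b(s,a). Then for all s, a, h: Q_{ĉ−b}^{π,p̂}(s,a,h) ≤ Q_{c★}^{π,p★}(s,a,h); in particular V_{ĉ−b}^{π,p̂}(s,1) ≤ V_{c★}^{π,p★}(s,1) for every state s. -/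
open Finset

section Helpers

variable {S A : Type*} [Fintype S] [Fintype A]

lemma Vf_stop (H : ℕ) (π : ℕ → S → PMF A) (p : S → A → PMF S) (m : S → A → ℝ)
    (h : ℕ) (hh : H + 1 ≤ h) (s : S) : Vf H π p m h s = 0 := by
  unfold Vf EVal
  rw [Nat.sub_eq_zero_of_le hh]
  rfl

lemma Vf_succ (H : ℕ) (π : ℕ → S → PMF A) (p : S → A → PMF S) (m : S → A → ℝ)
    (h : ℕ) (hh : h ≤ H) (s : S) :
    Vf H π p m h s = ∑ a : A, (π h s a).toReal * Qf H π p m h s a := by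
  unfold Vf EVal Qf
  have h1 : H + 1 - h = (H - h) + 1 := by omega
  have h2 : H + 1 - (h + 1) = H - h := by omega
  rw [h1]
  unfold Vf EVal
  rw [h2]
  rfl

end Helpers

/-- **Valid bonus implies optimism (consumption direction).** If the bonus `b` is
valid for the consumption objective with respect to the policy `π`, then the
bonus-enhanced model underestimates the true Q-function and value function. -/
theorem valid_bonus_implies_optimism_consumption
    {S A : Type*} [Fintype S] [Fintype A] [Nonempty S] [Nonempty A]
    (H : ℕ) (π : ℕ → S → PMF A) (pstar phat : S → A → PMF S)
    (cstar chat b : S → A → ℝ)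
    (hcstar : ∀ s a, cstar s a ∈ Set.Icc (0 : ℝ) 1)
    (hvalid : ∀ s a h, 1 ≤ h → h ≤ H →
      |(chat s a - cstar s a)
          + ∑ s' : S, ((phat s a s').toReal - (pstar s a s').toReal) *
              Vf H π pstar cstar (h + 1) s'|
        ≤ b s a) :
    (∀ s a h, 1 ≤ h → h ≤ H →
        Qf H π phat (fun s a => chat s a - b s a) h s a ≤ Qf H π pstar cstar h s a)
    ∧ (∀ s : S,
        Vf H π phat (fun s a => chat s a - b s a) 1 s ≤ Vf H π pstar cstar 1 s) := by
  set mhat : S → A → ℝ := fun s a => chat s a - b s a with hmhat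
  have key : ∀ n h, h + n = H + 1 → 1 ≤ h → ∀ s : S,
      Vf H π phat mhat h s ≤ Vf H π pstar cstar h s := by
    intro n
    induction n with
    | zero =>
        intro h hh _ s
        rw [Vf_stop H π phat mhat h (by omega), Vf_stop H π pstar cstar h (by omega)]
    | succ n ih =>
        intro h hh h1 s
        have hle : h ≤ H := by omega
        rw [Vf_succ H π phat mhat h hle, Vf_succ H π pstar cstar h hle]
        apply Finset.sum_le_sum
        intro a _
        refine mul_le_mul_of_nonneg_left ?_ ENNReal.toReal_nonneg
        have hV : ∀ s' : S, Vf H π phat mhat (h+1) s' ≤ Vf H π pstar cstar (h+1) s' :=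
          ih (h+1) (by omega) (by omega)
        have hb := (abs_le.mp (hvalid s a h h1 hle)).2
        have hsplit : ∑ s' : S, ((phat s a s').toReal - (pstar s a s').toReal) *
              Vf H π pstar cstar (h + 1) s'
            = (∑ s' : S, (phat s a s').toReal * Vf H π pstar cstar (h + 1) s')
              - ∑ s' : S, (pstar s a s').toReal * Vf H π pstar cstar (h + 1) s' := by
          rw [← Finset.sum_sub_distrib]
          exact Finset.sum_congr rfl fun s' _ => by ring
        have hmono : ∑ s' : S, (phat s a s').toReal * Vf H π phat mhat (h + 1) s'
            ≤ ∑ s' : S, (phat s a s').toReal * Vf H π pstar cstar (h + 1) s' :=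
          Finset.sum_le_sum fun s' _ =>
            mul_le_mul_of_nonneg_left (hV s') ENNReal.toReal_nonneg
        unfold Qf
        simp only [hmhat]
        rw [hsplit] at hb
        linarith
  refine ⟨fun s a h h1 hH => ?_, fun s => ?_⟩
  · have hV : ∀ s' : S, Vf H π phat mhat (h+1) s' ≤ Vf H π pstar cstar (h+1) s' :=
      key (H - h) (h+1) (by omega) (by omega)
    have hb := (abs_le.mp (hvalid s a h h1 hH)).2
    have hsplit : ∑ s' : S, ((phat s a s').toReal - (pstar s a s').toReal) *
          Vf H π pstar cstar (h + 1) s'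
        = (∑ s' : S, (phat s a s').toReal * Vf H π pstar cstar (h + 1) s')
          - ∑ s' : S, (pstar s a s').toReal * Vf H π pstar cstar (h + 1) s' := by
      rw [← Finset.sum_sub_distrib]
      exact Finset.sum_congr rfl fun s' _ => by ring
    have hmono : ∑ s' : S, (phat s a s').toReal * Vf H π phat mhat (h + 1) s'
        ≤ ∑ s' : S, (phat s a s').toReal * Vf H π pstar cstar (h + 1) s' :=
      Finset.sum_le_sum fun s' _ =>
        mul_le_mul_of_nonneg_left (hV s') ENNReal.toReal_nonneg
    unfold Qf
    simp only [hmhat]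
    rw [hsplit] at hb
    linarith
  · exact key H 1 (by omega) le_rfl s
end

section
/- Regret decomposition for the reward (Proposition 3.1, reward part): Let D be a finite index set of resources with capacities ξ : D → ℝ. Fix a true transition function p★, a true reward r★ : S × A → [0,1], and true consumptions c★_i : S × A → [0,1] for i ∈ D; fix estimates p̂, r̂, (ĉ_i)_{i∈D} and a bonus b : S × A → ℝ. Let π★ be a policy satisfying the true constraints: V_{c★_i}^{π★,p★}(s0,1) ≤ ξ(i) for all i ∈ D. Assume the bonus is valid with respect to π★, i.e., for all s, a, h and each objective pair (m̂, m★) ∈ {(r̂, r★)} ∪ {(ĉ_i, c★_i)}_{i∈D}: | (m̂(s,a) − m★(s,a)) + Σ_{s'} (p̂(s'|s,a) − p★(s'|s,a)) · V_{m★}^{π★,p★}(s', h+1) | ≤ b(s,a). Let π_k be an optimal solution of the planner: V_{ĉ_i−b}^{π_k,p̂}(s0,1) ≤ ξ(i) for all i ∈ D, and V_{r̂+b}^{π_k,p̂}(s0,1) ≥ V_{r̂+b}^{π,p̂}(s0,1) for every policy π with V_{ĉ_i−b}^{π,p̂}(s0,1) ≤ ξ(i) for all i ∈ D. Then V_{r★}^{π★,p★}(s0,1)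 − V_{r★}^{π_k,p★}(s0,1) ≤ E^{π_k,p★}[ Σ_{h=1}^H | Bell_{r̂+b}^{π_k,p̂}(s_h, a_h, h) | | s_1 = s0 ]. -/
open Finset

section AuxLemmas

variable {S A : Type*} [Fintype S] [Fintype A]

lemma EValAux_mono (π : ℕ → S → PMF A) (p : S → A → PMF S)
    (φ ψ : ℕ → S → A → ℝ) :
    ∀ n h, (∀ h' s a, h ≤ h' → h' < h + n → φ h' s a ≤ ψ h' s a) →
      ∀ s, EValAux π p φ n h s ≤ EValAux π p ψ n h s := by
  intro n
  induction n with
  | zero => intro h _ s; simp [EValAux]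
  | succ n ih =>
    intro h hle s
    simp only [EValAux]
    apply Finset.sum_le_sum
    intro a _
    apply mul_le_mul_of_nonneg_left _ ENNReal.toReal_nonneg
    apply add_le_add (hle h s a le_rfl (by omega))
    apply Finset.sum_le_sum
    intro s' _
    exact mul_le_mul_of_nonneg_left
      (ih (h + 1) (fun h' s a h1 h2 => hle h' s a (by omega) (by omega)) s')
      ENNReal.toReal_nonneg

lemma EValAux_congr (π : ℕ → S → PMF A) (p : S → A → PMF S)
    (φ ψ : ℕ → S → A → ℝ) (hφψ : ∀ h' s a, φ h' s a = ψ h' s a) :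
    ∀ n h s, EValAux π p φ n h s = EValAux π p ψ n h s := by
  intro n h s
  exact le_antisymm
    (EValAux_mono π p φ ψ n h (fun h' s a _ _ => (hφψ h' s a).le) s)
    (EValAux_mono π p ψ φ n h (fun h' s a _ _ => (hφψ h' s a).ge) s)

lemma EValAux_zero (π : ℕ → S → PMF A) (p : S → A → PMF S) :
    ∀ n h s, EValAux π p (fun _ _ _ => (0 : ℝ)) n h s = 0 := by
  intro n
  induction n with
  | zero => intro h s; simp [EValAux]
  | succ n ih => intro h s; simp [EValAux, ih]

lemma EValAux_neg (π : ℕ → S → PMF A) (p : S → A → PMF S) (φ : ℕ → S → A → ℝ) :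
    ∀ n h s, EValAux π p (fun h s a => -φ h s a) n h s = -EValAux π p φ n h s := by
  intro n
  induction n with
  | zero => intro h s; simp [EValAux]
  | succ n ih =>
    intro h s
    simp only [EValAux, ih]
    rw [← Finset.sum_neg_distrib]
    apply Finset.sum_congr rfl
    intro a _
    simp only [mul_neg, Finset.sum_neg_distrib]
    ring

lemma EValAux_sim (H : ℕ) (π : ℕ → S → PMF A) (p q : S → A → PMF S)
    (m m' : S → A → ℝ) :
    ∀ n h, h + n = H + 1 → ∀ s,
      EValAux π p (fun _ s a => m s a) n h s - EValAux π q (fun _ s a => m' s a) n h s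
        = EValAux π p (fun h' s a => (m s a - m' s a)
            + ∑ s' : S, ((p s a s').toReal - (q s a s').toReal) * Vf H π q m' (h' + 1) s')
            n h s := by
  intro n
  induction n with
  | zero => intro h _ s; simp [EValAux]
  | succ n ih =>
    intro h hH s
    have hVq : ∀ s', Vf H π q m' (h + 1) s' = EValAux π q (fun _ s a => m' s a) n (h + 1) s' := by
      intro s'
      simp only [Vf, EVal]
      congr 1
      omega
    have ihh := ih (h + 1) (by omega)
    simp only [EValAux]
    rw [← Finset.sum_sub_distrib]
    apply Finset.sum_congr rfl
    intro a _
    rw [← mul_sub]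
    congr 1
    simp only [hVq, ← ihh]
    simp only [sub_mul, mul_sub, Finset.sum_sub_distrib]
    ring

lemma Vf_one (H : ℕ) (π : ℕ → S → PMF A) (p : S → A → PMF S) (m : S → A → ℝ) (s : S) :
    Vf H π p m 1 s = EValAux π p (fun _ s a => m s a) H 1 s := by
  simp [Vf, EVal]

lemma EVal_one (H : ℕ) (π : ℕ → S → PMF A) (p : S → A → PMF S) (φ : ℕ → S → A → ℝ) (s : S) :
    EVal H π p φ 1 s = EValAux π p φ H 1 s := by
  simp [EVal]

end AuxLemmas

/-- **Regret decomposition for the reward (Proposition 3.1, reward part).** -/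
theorem regret_decomposition_reward
    {S A D : Type*} [Fintype S] [Fintype A] [Fintype D] [Nonempty S] [Nonempty A]
    (H : ℕ) (s0 : S) (ξ : D → ℝ)
    (pstar phat : S → A → PMF S)
    (rstar rhat b : S → A → ℝ) (cstar chat : D → S → A → ℝ)
    (hrstar : ∀ s a, rstar s a ∈ Set.Icc (0 : ℝ) 1)
    (hcstar : ∀ i s a, cstar i s a ∈ Set.Icc (0 : ℝ) 1)
    (πstar πk : ℕ → S → PMF A)
    -- π★ satisfies the true constraints
    (hfeas_star : ∀ i : D, Vf H πstar pstar (cstar i) 1 s0 ≤ ξ i)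
    -- the bonus is valid with respect to π★, for the reward objective ...
    (hvalid_r : ∀ s a h, 1 ≤ h → h ≤ H →
      |(rhat s a - rstar s a)
          + ∑ s' : S, ((phat s a s').toReal - (pstar s a s').toReal) *
              Vf H πstar pstar rstar (h + 1) s'|
        ≤ b s a)
    -- ... and for each consumption objective
    (hvalid_c : ∀ i : D, ∀ s a h, 1 ≤ h → h ≤ H →
      |(chat i s a - cstar i s a)
          + ∑ s' : S, ((phat s a s').toReal - (pstar s a s').toReal) *
              Vf H πstar pstar (cstar i) (h + 1) s'|
        ≤ b s a)
    -- πk is feasible for the planner computed on the bonus-enhanced model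
    (hfeas_k : ∀ i : D, Vf H πk phat (fun s a => chat i s a - b s a) 1 s0 ≤ ξ i)
    -- and πk is optimal for the planner among all feasible policies
    (hopt_k : ∀ π : ℕ → S → PMF A,
      (∀ i : D, Vf H π phat (fun s a => chat i s a - b s a) 1 s0 ≤ ξ i) →
      Vf H πk phat (fun s a => rhat s a + b s a) 1 s0
        ≥ Vf H π phat (fun s a => rhat s a + b s a) 1 s0) :
    Vf H πstar pstar rstar 1 s0 - Vf H πk pstar rstar 1 s0
      ≤ EVal H πk pstar
          (fun h s a => |Bell H πk phat (fun s a => rhat s a + b s a) pstar rstar h s a|)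
          1 s0 := by
  classical
  -- π★ is feasible for the planner on the bonus-enhanced model
  have feas : ∀ i : D, Vf H πstar phat (fun s a => chat i s a - b s a) 1 s0 ≤ ξ i := by
    intro i
    have hsim := EValAux_sim H πstar phat pstar (fun s a => chat i s a - b s a) (cstar i)
      H 1 (by omega) s0
    beta_reduce at hsim
    have hpt : ∀ h' s a, 1 ≤ h' → h' < 1 + H →
        (chat i s a - b s a - cstar i s a)
            + ∑ s' : S, ((phat s a s').toReal - (pstar s a s').toReal) *
                Vf H πstar pstar (cstar i) (h' + 1) s' ≤ 0 := by
      intro h' s a h1 h2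
      have hb := hvalid_c i s a h' h1 (by omega)
      have h3 := le_abs_self ((chat i s a - cstar i s a)
          + ∑ s' : S, ((phat s a s').toReal - (pstar s a s').toReal) *
              Vf H πstar pstar (cstar i) (h' + 1) s')
      linarith
    have hmono := EValAux_mono πstar phat _ (fun _ _ _ => (0 : ℝ)) H 1
      (fun h' s a h1 h2 => hpt h' s a h1 h2) s0
    rw [EValAux_zero] at hmono
    have hfs := hfeas_star i
    rw [Vf_one] at hfs
    rw [Vf_one]
    beta_reduce
    linarith
  -- optimism
  have opt : EValAux πstar pstar (fun _ s a => rstar s a) H 1 s0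
      ≤ EValAux πstar phat (fun _ s a => rhat s a + b s a) H 1 s0 := by
    have hsim := EValAux_sim H πstar phat pstar (fun s a => rhat s a + b s a) rstar
      H 1 (by omega) s0
    beta_reduce at hsim
    have hpt : ∀ h' s a, 1 ≤ h' → h' < 1 + H →
        (0 : ℝ) ≤ (rhat s a + b s a - rstar s a)
            + ∑ s' : S, ((phat s a s').toReal - (pstar s a s').toReal) *
                Vf H πstar pstar rstar (h' + 1) s' := by
      intro h' s a h1 h2
      have hb := hvalid_r s a h' h1 (by omega)
      have h3 := neg_abs_le ((rhat s a - rstar s a)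
          + ∑ s' : S, ((phat s a s').toReal - (pstar s a s').toReal) *
              Vf H πstar pstar rstar (h' + 1) s')
      linarith
    have hmono := EValAux_mono πstar phat (fun _ _ _ => (0 : ℝ)) _ H 1
      (fun h' s a h1 h2 => hpt h' s a h1 h2) s0
    rw [EValAux_zero] at hmono
    linarith
  -- optimality of πk
  have hk := hopt_k πstar feas
  rw [Vf_one, Vf_one] at hk
  beta_reduce at hk
  -- simulation lemma for πk
  have hsim3 := EValAux_sim H πk pstar phat rstar (fun s a => rhat s a + b s a)
    H 1 (by omega) s0
  beta_reduce at hsim3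
  have hBell : ∀ h' s a,
      Bell H πk phat (fun s a => rhat s a + b s a) pstar rstar h' s a
        = -((rstar s a - (rhat s a + b s a))
            + ∑ s' : S, ((pstar s a s').toReal - (phat s a s').toReal) *
                Vf H πk phat (fun s a => rhat s a + b s a) (h' + 1) s') := by
    intro h' s a
    simp only [Bell, Qf, sub_mul, Finset.sum_sub_distrib]
    ring
  have e1 : EValAux πk pstar
      (fun h s a => Bell H πk phat (fun s a => rhat s a + b s a) pstar rstar h s a) H 1 s0
      = - EValAux πk pstar
          (fun h' s a => (rstar s a - (rhat s a + b s a))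
            + ∑ s' : S, ((pstar s a s').toReal - (phat s a s').toReal) *
                Vf H πk phat (fun s a => rhat s a + b s a) (h' + 1) s') H 1 s0 := by
    rw [← EValAux_neg]
    exact EValAux_congr _ _ _ _ hBell H 1 s0
  have e2 : EValAux πk pstar
      (fun h s a => Bell H πk phat (fun s a => rhat s a + b s a) pstar rstar h s a) H 1 s0
      ≤ EValAux πk pstar
          (fun h s a => |Bell H πk phat (fun s a => rhat s a + b s a) pstar rstar h s a|)
          H 1 s0 :=
    EValAux_mono πk pstar _ _ H 1 (fun h' s a _ _ => le_abs_self _) s0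
  rw [Vf_one, Vf_one, EVal_one]
  beta_reduce
  linarith
end

section
/- Regret decomposition for consumption (Proposition 3.1, consumption part): Let D be a finite index set of resources with capacities ξ : D → ℝ. Fix a true transition function p★ and true consumptions c★_i : S × A → [0,1] for i ∈ D; fix estimates p̂, (ĉ_i)_{i∈D} and a bonus b : S × A → ℝ. Let π be any policy that is feasible for the estimated planner, i.e., V_{ĉ_i−b}^{π,p̂}(s0,1) ≤ ξ(i) for all i ∈ D. Then for every i ∈ D: V_{c★_i}^{π,p★}(s0,1) − ξ(i) ≤ E^{π,p★}[ Σ_{h=1}^H | Bell_{ĉ_i−b}^{π,p̂}(s_h, a_h, h) | | s_1 = s0 ], where the Bellman error is taken with respect to the true pair (p★, c★_i). -/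
open Finset

/-- **Regret decomposition for consumption (Proposition 3.1, consumption part).**
Any policy feasible for the estimated planner overconsumes each resource by at
most the expected sum of absolute Bellman errors. -/
theorem regret_decomposition_consumption
    {S A D : Type*} [Fintype S] [Fintype A] [Fintype D] [Nonempty S] [Nonempty A]
    (H : ℕ) (s0 : S) (ξ : D → ℝ)
    (pstar phat : S → A → PMF S)
    (b : S → A → ℝ) (cstar chat : D → S → A → ℝ)
    (hcstar : ∀ i s a, cstar i s a ∈ Set.Icc (0 : ℝ) 1)
    (π : ℕ → S → PMF A)
    -- π is feasible for the estimated planner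
    (hfeas : ∀ i : D, Vf H π phat (fun s a => chat i s a - b s a) 1 s0 ≤ ξ i) :
    ∀ i : D,
      Vf H π pstar (cstar i) 1 s0 - ξ i
        ≤ EVal H π pstar
            (fun h s a => |Bell H π phat (fun s a => chat i s a - b s a) pstar (cstar i) h s a|)
            1 s0 := by
  intro i
  set m : S → A → ℝ := fun s a => chat i s a - b s a with hm
  suffices key : ∀ n h, h + n = H + 1 → ∀ s : S,
      EValAux π pstar (fun _ s a => cstar i s a) n h s ≤
        EValAux π phat (fun _ s a => m s a) n h s +
        EValAux π pstar
          (fun h s a => |Bell H π phat m pstar (cstar i) h s a|) n h s by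
    have h1 := key H 1 (by omega) s0
    have h2 := hfeas i
    unfold Vf EVal at h2 ⊢
    have e : H + 1 - 1 = H := by omega
    rw [e] at h2 ⊢
    linarith
  intro n
  induction n with
  | zero => intro h hh s; simp [EValAux]
  | succ n ih =>
    intro h hh s
    have hVeq : ∀ s' : S, Vf H π phat m (h + 1) s' =
        EValAux π phat (fun _ s a => m s a) n (h + 1) s' := by
      intro s'; unfold Vf EVal
      congr 1
      omega
    simp only [EValAux]
    rw [← Finset.sum_add_distrib]
    apply Finset.sum_le_sum
    intro a _
    rw [← mul_add]
    apply mul_le_mul_of_nonneg_left _ ENNReal.toReal_nonneg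
    have hBell : m s a + ∑ s' : S, (phat s a s').toReal *
          EValAux π phat (fun _ s a => m s a) n (h + 1) s'
        = cstar i s a + (∑ s' : S, (pstar s a s').toReal *
            EValAux π phat (fun _ s a => m s a) n (h + 1) s')
          + Bell H π phat m pstar (cstar i) h s a := by
      unfold Bell Qf
      simp only [hVeq]
      ring
    rw [hBell]
    have habs : -(|Bell H π phat m pstar (cstar i) h s a|)
        ≤ Bell H π phat m pstar (cstar i) h s a := neg_abs_le _
    have hsum : ∑ s' : S, (pstar s a s').toReal *
          EValAux π pstar (fun _ s a => cstar i s a) n (h + 1) s'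
        ≤ (∑ s' : S, (pstar s a s').toReal *
            EValAux π phat (fun _ s a => m s a) n (h + 1) s')
          + ∑ s' : S, (pstar s a s').toReal *
            EValAux π pstar
              (fun h s a => |Bell H π phat m pstar (cstar i) h s a|) n (h + 1) s' := by
      rw [← Finset.sum_add_distrib]
      apply Finset.sum_le_sum
      intro s' _
      rw [← mul_add]
      exact mul_le_mul_of_nonneg_left (ih (h + 1) (by omega) s') ENNReal.toReal_nonneg
    linarith
end

section
/- Feasibility of the optimal policy in ConvexConPlanner (Lemma C.1): Let D be a finite index set of resources and g : ℝ^D → ℝ any function. Fix a true transition function p★ and true consumptions c★_i : S × A → [0,1] for i ∈ D; fix estimates p̂, (ĉ_i)_{i∈D} and a bonus b : S × A → ℝ with b ≥ 0. Let π★ be a policy such that g( (V_{c★_i}^{π★,p★}(s0,1))_{i∈D} ) ≤ 0, and suppose the bonus is valid with respect to π★ for each consumption objective, i.e., for all s, a, h and all i ∈ D: | (ĉ_i(s,a) − c★_i(s,a)) + Σ_{s'} (p̂(s'|s,a) − p★(s'|s,a)) · V_{c★_i}^{π★,p★}(s', h+1) | ≤ b(s,a). Then there exist consumption functions c_i : S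 × A → ℝ with |c_i(s,a) − ĉ_i(s,a)| ≤ b(s,a) for all s, a, i, such that V_{c_i}^{π★,p̂}(s0,1) = V_{c★_i}^{π★,p★}(s0,1) for every i ∈ D; in particular g( (V_{c_i}^{π★,p̂}(s0,1))_{i∈D} ) ≤ 0, so π★ is a feasible solution of the ConvexConPlanner program. -/
open Finset

/-!
The true value `V⋆ = V_{c⋆}^{π⋆,p⋆}` is compared with the value of `π⋆` in the estimated model
under the consumption `ĉ + t b`. By the simulation lemma their difference is the expectation,
under `π⋆` and `p̂`, of the Bellman error of the true model measured against `(p̂, ĉ + t b)`, and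
bonus validity makes that error nonnegative at `t = -1` and nonpositive at `t = 1`. The estimated
value is continuous in `t`, so the intermediate value theorem yields `t ∈ [-1, 1]` with equal values.
-/

section Simulation

variable {S A : Type*} [Fintype S] [Fintype A] {H : ℕ} {π : ℕ → S → PMF A} {p : S → A → PMF S}

theorem EVal_of_lt {φ : ℕ → S → A → ℝ} {h : ℕ} (hh : H < h) (s : S) :
    EVal H π p φ h s = 0 := by
  rw [EVal, Nat.sub_eq_zero_of_le hh, EValAux]

theorem EVal_of_le {φ : ℕ → S → A → ℝ} {h : ℕ} (hh : h ≤ H) (s : S) :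
    EVal H π p φ h s =
      ∑ a : A, (π h s a).toReal *
        (φ h s a + ∑ s' : S, (p s a s').toReal * EVal H π p φ (h + 1) s') := by
  rw [EVal, show H + 1 - h = H + 1 - (h + 1) + 1 by omega, EValAux]
  rfl

theorem Vf_of_le {m : S → A → ℝ} {h : ℕ} (hh : h ≤ H) (s : S) :
    Vf H π p m h s = ∑ a : A, (π h s a).toReal * Qf H π p m h s a :=
  EVal_of_le hh s

theorem EVal_zero (h : ℕ) (s : S) : EVal H π p (fun _ _ _ => 0) h s = 0 := by
  obtain ⟨n, hn⟩ : ∃ n, H + 1 - h = n := ⟨_, rfl⟩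
  induction n generalizing h s with
  | zero => exact EVal_of_lt (by omega) s
  | succ n ih => simp [EVal_of_le (show h ≤ H by omega), ih (h + 1) _ (by omega)]

theorem EVal_mono {φ ψ : ℕ → S → A → ℝ} {h : ℕ}
    (hφψ : ∀ h' s a, h ≤ h' → h' ≤ H → φ h' s a ≤ ψ h' s a) (s : S) :
    EVal H π p φ h s ≤ EVal H π p ψ h s := by
  obtain ⟨n, hn⟩ : ∃ n, H + 1 - h = n := ⟨_, rfl⟩
  induction n generalizing h s with
  | zero => rw [EVal_of_lt (by omega), EVal_of_lt (by omega)]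
  | succ n ih =>
    have hh : h ≤ H := by omega
    have ih' : ∀ s', EVal H π p φ (h + 1) s' ≤ EVal H π p ψ (h + 1) s' := fun s' =>
      ih (fun h' s a h1 h2 => hφψ h' s a (by omega) h2) s' (by omega)
    rw [EVal_of_le hh, EVal_of_le hh]
    gcongr with a _ s' _
    · exact hφψ h s a le_rfl hh
    · exact ih' s'

theorem continuous_EVal {φ : ℝ → ℕ → S → A → ℝ} (hφ : ∀ h s a, Continuous fun t => φ t h s a)
    (h : ℕ) (s : S) : Continuous fun t => EVal H π p (φ t) h s := by
  obtain ⟨n, hn⟩ : ∃ n, H + 1 - h = n := ⟨_, rfl⟩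
  induction n generalizing h s with
  | zero => simp_rw [EVal_of_lt (show H < h by omega)]; exact continuous_const
  | succ n ih =>
    have ih' := fun s' => ih (h + 1) s' (by omega)
    simp_rw [EVal_of_le (show h ≤ H by omega)]
    fun_prop

theorem Vf_sub_Vf_eq_EVal_Bell (m : S → A → ℝ) (p' : S → A → PMF S) (m' : S → A → ℝ)
    (h : ℕ) (s : S) :
    Vf H π p m h s - Vf H π p' m' h s = EVal H π p' (Bell H π p m p' m') h s := by
  obtain ⟨n, hn⟩ : ∃ n, H + 1 - h = n := ⟨_, rfl⟩
  induction n generalizing h s with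
  | zero => simp only [Vf, EVal_of_lt (show H < h by omega), sub_zero]
  | succ n ih =>
    have hh : h ≤ H := by omega
    rw [Vf_of_le hh, Vf, EVal_of_le hh, EVal_of_le hh, ← sum_sub_distrib]
    refine sum_congr rfl fun a _ => ?_
    simp only [← ih (h + 1) _ (by omega), Bell, mul_sub, sum_sub_distrib, Vf]
    ring

theorem Vf_le_Vf_of_Bell_nonneg {m : S → A → ℝ} {p' : S → A → PMF S} {m' : S → A → ℝ} {h : ℕ}
    (hBell : ∀ h' s a, h ≤ h' → h' ≤ H → 0 ≤ Bell H π p m p' m' h' s a) (s : S) :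
    Vf H π p' m' h s ≤ Vf H π p m h s := by
  have hgap := EVal_mono (π := π) (p := p') hBell s
  rw [EVal_zero, ← Vf_sub_Vf_eq_EVal_Bell] at hgap
  linarith

theorem Vf_le_Vf_of_Bell_nonpos {m : S → A → ℝ} {p' : S → A → PMF S} {m' : S → A → ℝ} {h : ℕ}
    (hBell : ∀ h' s a, h ≤ h' → h' ≤ H → Bell H π p m p' m' h' s a ≤ 0) (s : S) :
    Vf H π p m h s ≤ Vf H π p' m' h s := by
  have hgap := EVal_mono (π := π) (p := p') hBell s
  rw [EVal_zero, ← Vf_sub_Vf_eq_EVal_Bell] at hgap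
  linarith

theorem Bell_eq_neg (m : S → A → ℝ) (p' : S → A → PMF S) (m' : S → A → ℝ) (h : ℕ) (s : S)
    (a : A) :
    Bell H π p m p' m' h s a =
      -((m' s a - m s a) + ∑ s' : S, ((p' s a s').toReal - (p s a s').toReal) *
        Vf H π p m (h + 1) s') := by
  simp only [Bell, Qf, sub_mul, sum_sub_distrib]
  ring

end Simulation

theorem exists_Vf_eq_of_abs_le_bonus {S A : Type*} [Fintype S] [Fintype A] (H : ℕ)
    (π : ℕ → S → PMF A) (pstar phat : S → A → PMF S) (cstar chat b : S → A → ℝ)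
    (hb : ∀ s a, 0 ≤ b s a)
    (hvalid : ∀ s a h, 1 ≤ h → h ≤ H →
      |(chat s a - cstar s a)
          + ∑ s' : S, ((phat s a s').toReal - (pstar s a s').toReal) *
              Vf H π pstar cstar (h + 1) s'| ≤ b s a)
    (s0 : S) :
    ∃ c : S → A → ℝ, (∀ s a, |c s a - chat s a| ≤ b s a) ∧
      Vf H π phat c 1 s0 = Vf H π pstar cstar 1 s0 := by
  set c : ℝ → S → A → ℝ := fun t s a => chat s a + t * b s a
  have hcont : Continuous fun t => Vf H π phat (c t) 1 s0 :=
    continuous_EVal (fun _ _ _ => by fun_prop) 1 s0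
  have hlow : Vf H π phat (c (-1)) 1 s0 ≤ Vf H π pstar cstar 1 s0 :=
    Vf_le_Vf_of_Bell_nonneg (fun h s a h1 hH => by
      have := (abs_le.mp (hvalid s a h h1 hH)).2
      rw [Bell_eq_neg]; linarith) s0
  have hhigh : Vf H π pstar cstar 1 s0 ≤ Vf H π phat (c 1) 1 s0 :=
    Vf_le_Vf_of_Bell_nonpos (fun h s a h1 hH => by
      have := (abs_le.mp (hvalid s a h h1 hH)).1
      rw [Bell_eq_neg]; linarith) s0
  obtain ⟨t, ht, hVt⟩ :=
    intermediate_value_Icc (by norm_num : (-1 : ℝ) ≤ 1) hcont.continuousOn ⟨hlow, hhigh⟩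
  refine ⟨c t, fun s a => ?_, hVt⟩
  calc |c t s a - chat s a| = |t| * b s a := by simp [c, abs_mul, abs_of_nonneg (hb s a)]
    _ ≤ 1 * b s a := by gcongr; exacts [hb s a, abs_le.mpr ht]
    _ = b s a := one_mul _

theorem feasibility_optimal_policy_convex_general
    {S A D : Type*} [Fintype S] [Fintype A]
    (H : ℕ) (s0 : S) (g : (D → ℝ) → ℝ)
    (pstar phat : S → A → PMF S)
    (cstar chat : D → S → A → ℝ) (b : S → A → ℝ)
    (hb : ∀ s a, 0 ≤ b s a)
    (πstar : ℕ → S → PMF A)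
    (hgstar : g (fun i => Vf H πstar pstar (cstar i) 1 s0) ≤ 0)
    (hvalid : ∀ i : D, ∀ s a h, 1 ≤ h → h ≤ H →
      |(chat i s a - cstar i s a)
          + ∑ s' : S, ((phat s a s').toReal - (pstar s a s').toReal) *
              Vf H πstar pstar (cstar i) (h + 1) s'|
        ≤ b s a) :
    ∃ c : D → S → A → ℝ,
      (∀ i s a, |c i s a - chat i s a| ≤ b s a)
      ∧ (∀ i : D, Vf H πstar phat (c i) 1 s0 = Vf H πstar pstar (cstar i) 1 s0)
      ∧ g (fun i => Vf H πstar phat (c i) 1 s0) ≤ 0 := by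
  choose c hc hVc using fun i =>
    exists_Vf_eq_of_abs_le_bonus H πstar pstar phat (cstar i) (chat i) b hb (hvalid i) s0
  exact ⟨c, hc, hVc, funext hVc ▸ hgstar⟩

/-- **Feasibility of the optimal policy in ConvexConPlanner (Lemma C.1).**
If the bonus is valid with respect to `π★` for each consumption objective, then
there exist consumptions within the bonus band around the empirical estimates under
which `π★` attains, in the estimated model, exactly its true consumption values;
in particular `π★` is feasible for the ConvexConPlanner program. -/
theorem feasibility_optimal_policy_convex
    {S A D : Type*} [Fintype S] [Fintype A] [Fintype D] [Nonempty S] [Nonempty A]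
    (H : ℕ) (s0 : S) (g : (D → ℝ) → ℝ)
    (pstar phat : S → A → PMF S)
    (cstar chat : D → S → A → ℝ) (b : S → A → ℝ)
    (hcstar : ∀ i s a, cstar i s a ∈ Set.Icc (0 : ℝ) 1)
    (hb : ∀ s a, 0 ≤ b s a)
    (πstar : ℕ → S → PMF A)
    (hgstar : g (fun i => Vf H πstar pstar (cstar i) 1 s0) ≤ 0)
    (hvalid : ∀ i : D, ∀ s a h, 1 ≤ h → h ≤ H →
      |(chat i s a - cstar i s a)
          + ∑ s' : S, ((phat s a s').toReal - (pstar s a s').toReal) *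
              Vf H πstar pstar (cstar i) (h + 1) s'|
        ≤ b s a) :
    ∃ c : D → S → A → ℝ,
      (∀ i s a, |c i s a - chat i s a| ≤ b s a)
      ∧ (∀ i : D, Vf H πstar phat (c i) 1 s0 = Vf H πstar pstar (cstar i) 1 s0)
      ∧ g (fun i => Vf H πstar phat (c i) 1 s0) ≤ 0 :=
  feasibility_optimal_policy_convex_general H s0 g pstar phat cstar chat b hb πstar hgstar hvalid
end

section
/- Every flow-feasible occupation measure is realized by a Markovian policy: Let ρ : S × A × {1,…,H} → [0,1] satisfy: Σ_{a} ρ(s,a,1) = 𝟙{s = s0} for all s ∈ S, and the flow constraints Σ_{a'} ρ(s',a',h+1) = Σ_{s,a} ρ(s,a,h)·p(s'|s,a) for all s' ∈ S and h ∈ {1,…,H−1}, where p is a transition function. Define a Markovian policy π by π_h(a|s) = ρ(s,a,h) / Σ_{a'} ρ(s,a',h) whenever Σ_{a'} ρ(s,a',h) > 0 (and arbitrarily otherwise). Then the occupation measure of π equals ρ, i.e., ρ_π(s,a,h) = ρ(s,a,h) for all s, a, h; consequently, for every objective m : S × A → ℝ, V_m^{π,p}(s0,1) = Σ_{h=1}^H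 Σ_{s,a} ρ(s,a,h)·m(s,a). -/
open Finset

/-- Occupation measure `ρ_π(s,a,h) = ℙ^{π,p}(s_h = s, a_h = a | s_1 = s0)`,
defined by forward recursion. -/
noncomputable def occ {S A : Type*} [Fintype S] [Fintype A] [DecidableEq S]
    (π : ℕ → S → PMF A) (p : S → A → PMF S) (s0 : S) : ℕ → S → A → ℝ
  | 0, _, _ => 0
  | 1, s, a => (if s = s0 then 1 else 0) * (π 1 s0 a).toReal
  | h + 2, s', a' =>
      (∑ s : S, ∑ a : A, occ π p s0 (h + 1) s a * (p s a s').toReal) * (π (h + 2) s' a').toReal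


/-!
At every stage the occupation measure of a policy is its state marginal times the policy.
The normalized policy reproduces the split of each state marginal of `ρ` among actions
(where a marginal vanishes, nonnegativity makes the arbitrary choice harmless), and the
flow constraints propagate the marginals of `ρ` exactly as the forward recursion propagates
those of the occupation measure; so the two agree by induction on the stage. The value
identity comes from pairing the backward value recursion with the forward recursion.
-/

theorem PMF.sum_toReal_eq_one {α : Type*} [Fintype α] (q : PMF α) :
    ∑ a, (q a).toReal = 1 := by
  rw [← ENNReal.toReal_sum fun a _ => q.apply_ne_top a,
    ← tsum_fintype (L := .unconditional α), q.tsum_coe, ENNReal.toReal_one]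

theorem PMF.sum_mul_toReal_eq_of_normalize {α : Type*} [Fintype α] (q : PMF α)
    {f : α → ℝ} (hf : ∀ a, 0 ≤ f a)
    (hq : 0 < ∑ a', f a' → ∀ a, (q a).toReal = f a / ∑ a', f a') (a : α) :
    (∑ a', f a') * (q a).toReal = f a := by
  rcases (Finset.sum_nonneg fun a' _ => hf a').lt_or_eq with hpos | hzero
  · rw [hq hpos a, mul_div_cancel₀ _ hpos.ne']
  · rw [← hzero, zero_mul,
      (Finset.sum_eq_zero_iff_of_nonneg fun a' _ => hf a').mp hzero.symm a (mem_univ a)]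

section Occupation

variable {S A : Type*} [Fintype S] [Fintype A] [DecidableEq S]
  (π : ℕ → S → PMF A) (p : S → A → PMF S) (s0 : S)

theorem occ_one (s : S) (a : A) :
    occ π p s0 1 s a = (if s = s0 then 1 else 0) * (π 1 s a).toReal := by
  by_cases hs : s = s0 <;> simp [occ, hs]

theorem occ_succ {h : ℕ} (hh : 1 ≤ h) (s' : S) (a' : A) :
    occ π p s0 (h + 1) s' a'
      = (∑ s, ∑ a, occ π p s0 h s a * (p s a s').toReal) * (π (h + 1) s' a').toReal := by
  obtain ⟨k, rfl⟩ := Nat.exists_eq_add_of_le' hh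
  rw [occ]

theorem sum_occ_one (s : S) : ∑ a, occ π p s0 1 s a = if s = s0 then 1 else 0 := by
  simp_rw [occ_one, ← mul_sum, PMF.sum_toReal_eq_one, mul_one]

theorem sum_occ_succ {h : ℕ} (hh : 1 ≤ h) (s' : S) :
    ∑ a', occ π p s0 (h + 1) s' a' = ∑ s, ∑ a, occ π p s0 h s a * (p s a s').toReal := by
  simp_rw [occ_succ π p s0 hh, ← mul_sum, PMF.sum_toReal_eq_one, mul_one]

theorem occ_eq_sum_occ_mul {h : ℕ} (hh : 1 ≤ h) (s : S) (a : A) :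
    occ π p s0 h s a = (∑ a', occ π p s0 h s a') * (π h s a).toReal := by
  induction h, hh using Nat.le_induction with
  | base => rw [sum_occ_one, occ_one]
  | succ h hh _ => rw [sum_occ_succ π p s0 hh, occ_succ π p s0 hh]

theorem sum_sum_occ_mul_EValAux (φ : ℕ → S → A → ℝ) (n : ℕ) {h : ℕ} (hh : 1 ≤ h) :
    ∑ s, (∑ a, occ π p s0 h s a) * EValAux π p φ n h s
      = ∑ k ∈ Ico h (h + n), ∑ s, ∑ a, occ π p s0 k s a * φ k s a := by
  induction n generalizing h with
  | zero => simp [EValAux]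
  | succ n ih =>
    have hnext :
        ∑ s, ∑ a, ∑ s', occ π p s0 h s a * (p s a s').toReal * EValAux π p φ n (h + 1) s'
          = ∑ s', (∑ a', occ π p s0 (h + 1) s' a') * EValAux π p φ n (h + 1) s' := by
      simp_rw [sum_occ_succ π p s0 hh, sum_mul]
      exact (sum_congr rfl fun s _ => sum_comm).trans sum_comm
    calc ∑ s, (∑ a, occ π p s0 h s a) * EValAux π p φ (n + 1) h s
        = ∑ s, ∑ a, occ π p s0 h s a *
            (φ h s a + ∑ s', (p s a s').toReal * EValAux π p φ n (h + 1) s') := by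
          simp_rw [EValAux, mul_sum, ← mul_assoc, ← occ_eq_sum_occ_mul π p s0 hh]
      _ = ∑ s, ∑ a, occ π p s0 h s a * φ h s a
          + ∑ s, ∑ a, ∑ s',
              occ π p s0 h s a * (p s a s').toReal * EValAux π p φ n (h + 1) s' := by
          simp_rw [mul_add, mul_sum, mul_assoc, sum_add_distrib]
      _ = ∑ k ∈ Ico h (h + (n + 1)), ∑ s, ∑ a, occ π p s0 k s a * φ k s a := by
          rw [hnext, ih (Nat.le_succ_of_le hh),
            sum_eq_sum_Ico_succ_bot (show h < h + (n + 1) by omega),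
            show h + 1 + n = h + (n + 1) by omega]

theorem Vf_one_eq_sum_occ (H : ℕ) (m : S → A → ℝ) :
    Vf H π p m 1 s0 = ∑ h ∈ Icc 1 H, ∑ s, ∑ a, occ π p s0 h s a * m s a := by
  have := sum_sum_occ_mul_EValAux π p s0 (fun _ s a => m s a) H le_rfl
  simp only [sum_occ_one, ite_mul, one_mul, zero_mul, sum_ite_eq', mem_univ, if_true] at this
  rw [Vf, EVal, Nat.add_sub_cancel, this, add_comm, Ico_add_one_right_eq_Icc]

theorem occ_eq_of_flow {H : ℕ} (ρ : ℕ → S → A → ℝ) (hρ : ∀ h s a, 0 ≤ ρ h s a)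
    (hinit : ∀ s, ∑ a, ρ 1 s a = if s = s0 then 1 else 0)
    (hflow : ∀ s' h, 1 ≤ h → h ≤ H - 1 →
      ∑ a', ρ (h + 1) s' a' = ∑ s, ∑ a, ρ h s a * (p s a s').toReal)
    (hπ : ∀ h s a, 1 ≤ h → h ≤ H → 0 < ∑ a', ρ h s a' →
      (π h s a).toReal = ρ h s a / ∑ a', ρ h s a')
    {h : ℕ} (h1 : 1 ≤ h) (hH : h ≤ H) (s : S) (a : A) : occ π p s0 h s a = ρ h s a := by
  have hnorm :
      ∀ h, 1 ≤ h → h ≤ H → ∀ s a, (∑ a', ρ h s a') * (π h s a).toReal = ρ h s a :=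
    fun h h1 hH s => (π h s).sum_mul_toReal_eq_of_normalize (hρ h s)
      fun hpos a => hπ h s a h1 hH hpos
  induction h, h1 using Nat.le_induction generalizing s a with
  | base => rw [occ_one, ← hinit, hnorm 1 le_rfl hH]
  | succ h h1 ih =>
    have hinflow : ∑ s', ∑ a', occ π p s0 h s' a' * (p s' a' s).toReal
        = ∑ s', ∑ a', ρ h s' a' * (p s' a' s).toReal := by
      refine sum_congr rfl fun s' _ => sum_congr rfl fun a' _ => ?_
      rw [ih (by omega)]
    rw [occ_succ π p s0 h1, hinflow, ← hflow s h h1 (by omega), hnorm (h + 1) (by omega) hH]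

end Occupation

theorem flow_feasible_occupation_realized_general
    {S A : Type*} [Fintype S] [Fintype A] [DecidableEq S]
    (H : ℕ) (s0 : S) (p : S → A → PMF S)
    (ρ : ℕ → S → A → ℝ)
    (hρ : ∀ h s a, 0 ≤ ρ h s a ∧ ρ h s a ≤ 1)
    (hinit : ∀ s : S, ∑ a : A, ρ 1 s a = if s = s0 then 1 else 0)
    (hflow : ∀ s' : S, ∀ h, 1 ≤ h → h ≤ H - 1 →
        ∑ a' : A, ρ (h + 1) s' a'
          = ∑ s : S, ∑ a : A, ρ h s a * (p s a s').toReal)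
    (π : ℕ → S → PMF A)
    (hπ : ∀ h s a, 1 ≤ h → h ≤ H → 0 < ∑ a' : A, ρ h s a' →
        (π h s a).toReal = ρ h s a / ∑ a' : A, ρ h s a') :
    (∀ h s a, 1 ≤ h → h ≤ H → occ π p s0 h s a = ρ h s a)
    ∧ (∀ m : S → A → ℝ,
        Vf H π p m 1 s0
          = ∑ h ∈ Finset.Icc 1 H, ∑ s : S, ∑ a : A, ρ h s a * m s a) := by
  have hocc h s a (h1 : 1 ≤ h) (hH : h ≤ H) : occ π p s0 h s a = ρ h s a :=
    occ_eq_of_flow π p s0 ρ (fun h s a => (hρ h s a).1) hinit hflow hπ h1 hH s a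
  refine ⟨hocc, fun m => ?_⟩
  rw [Vf_one_eq_sum_occ]
  refine sum_congr rfl fun h hh => ?_
  obtain ⟨h1, hH⟩ := mem_Icc.mp hh
  simp_rw [hocc h _ _ h1 hH]

/-- **Every flow-feasible occupation measure is realized by a Markovian policy.**
If `ρ` satisfies the initial condition and the flow constraints, and `π` is the
policy obtained by normalizing `ρ` (arbitrary where the normalization is not
defined), then the occupation measure of `π` equals `ρ`, and consequently values
of every objective are represented by `ρ`. -/
theorem flow_feasible_occupation_realized
    {S A : Type*} [Fintype S] [Fintype A] [DecidableEq S] [Nonempty S] [Nonempty A]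
    (H : ℕ) (s0 : S) (p : S → A → PMF S)
    (ρ : ℕ → S → A → ℝ)
    (hρ : ∀ h s a, 0 ≤ ρ h s a ∧ ρ h s a ≤ 1)
    (hinit : ∀ s : S, ∑ a : A, ρ 1 s a = if s = s0 then 1 else 0)
    (hflow : ∀ s' : S, ∀ h, 1 ≤ h → h ≤ H - 1 →
        ∑ a' : A, ρ (h + 1) s' a'
          = ∑ s : S, ∑ a : A, ρ h s a * (p s a s').toReal)
    (π : ℕ → S → PMF A)
    (hπ : ∀ h s a, 1 ≤ h → h ≤ H → 0 < ∑ a' : A, ρ h s a' →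
        (π h s a).toReal = ρ h s a / ∑ a' : A, ρ h s a') :
    (∀ h s a, 1 ≤ h → h ≤ H → occ π p s0 h s a = ρ h s a)
    ∧ (∀ m : S → A → ℝ,
        Vf H π p m 1 s0
          = ∑ h ∈ Finset.Icc 1 H, ∑ s : S, ∑ a : A, ρ h s a * m s a) :=
  flow_feasible_occupation_realized_general H s0 p ρ hρ hinit hflow π hπ
end
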